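/- arXiv:math/0112241 — 2 statements merged into one kernel-verified Lean document; each statement's English description precedes it below -/
import Mathlib

section
/- If φ avoids Ω₁, then the Lie algebra Der(F_φ) of derivations of F_φ is 3-step solvable: writing D⁰ = Der(F_φ) and D^{m+1} = [D^m, D^m] for its derived series, one has D³ = 0 and D² ≠ 0. -/
open scoped BigOperators

noncomputable section

/-- The underlying space ℂ^{2p} of the Lie algebra `F_φ`. -/
abbrev V (p : ℕ) : Type := Fin (2*p) → ℂ

/-- The space of bilinear maps ℂ^{2p} × ℂ^{2p} → ℂ^{2p}. -/
abbrev Bil (p : ℕ) : Type := V p →ₗ[ℂ] V p →ₗ[ℂ] V p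

/-- The basis vector `X j` (1-indexed, j = 1, …, 2p). -/
def X (p j : ℕ) : V p := fun i => if (i : ℕ) + 1 = j then 1 else 0

/-- The coordinate functional dual to `X j` (1-indexed). -/
def coordL (p j : ℕ) : V p →ₗ[ℂ] ℂ :=
  if h : j - 1 < 2*p then LinearMap.proj (⟨j - 1, h⟩ : Fin (2*p)) else 0

/-- The elementary alternating bilinear map `(x,y) ↦ (x_a y_b − x_b y_a) • v`
(indices 1-based). -/
def elem (p a b : ℕ) (v : V p) : Bil p :=
  (coordL p a).smulRight ((coordL p b).smulRight v)
    - (coordL p b).smulRight ((coordL p a).smulRight v)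

/-- The Lie bracket of the frobeniusian model algebra `F_φ`:
`[X_1,X_2] = −X_1`, `[X_{2k+1},X_{2k+2}] = −X_1`, `[X_2,X_{2k+1}] = −φ_k X_{2k+1}`,
`[X_2,X_{2k+2}] = (1+φ_k) X_{2k+2}` for `1 ≤ k ≤ p−1`. -/
def mu (p : ℕ) (φ : ℕ → ℂ) : Bil p :=
  elem p 1 2 (-(X p 1)) +
    ∑ k ∈ Finset.Icc 1 (p-1),
      (elem p (2*k+1) (2*k+2) (-(X p 1)) + elem p 2 (2*k+1) (-(φ k) • X p (2*k+1))
        + elem p 2 (2*k+2) ((1 + φ k) • X p (2*k+2)))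

/-- `φ` avoids the set `Ω₁`. -/
def AvoidsOmega1 (p : ℕ) (φ : ℕ → ℂ) : Prop :=
  ∀ i j : ℕ, 1 ≤ i → i ≤ p - 1 → 1 ≤ j → j ≤ p - 1 →
    1 + φ i + φ j ≠ 0 ∧ 2 + φ i + φ j ≠ 0 ∧ (i ≠ j → φ i ≠ φ j) ∧
      φ i ≠ 0 ∧ φ i ≠ -1 ∧ 2 * φ i + 1 ≠ 0

/-- `φ` avoids the set `Ω = Ω₁ ∪ Ω₂`. -/
def AvoidsOmega (p : ℕ) (φ : ℕ → ℂ) : Prop :=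
  AvoidsOmega1 p φ ∧
    ∀ i j : ℕ, 1 ≤ i → i ≤ p - 1 → 1 ≤ j → j ≤ p - 1 →
      (i ≠ j → 1 + φ i - φ j ≠ 0) ∧ φ i + φ j ≠ 0 ∧ 2 + φ i ≠ 0 ∧ 1 - φ i ≠ 0 ∧
        1 + 2*φ i - φ j ≠ 0 ∧ 1 + 2*φ i + φ j ≠ 0 ∧ 2*φ i - φ j ≠ 0 ∧ 2 + 2*φ i + φ j ≠ 0

/-- The space of derivations of a bilinear bracket `B` on `ℂ^{2p}`. -/
def derSub (p : ℕ) (B : Bil p) : Submodule ℂ (V p →ₗ[ℂ] V p) where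
  carrier := {D | ∀ x y, D (B x y) = B (D x) y + B x (D y)}
  add_mem' := by
    intro D E hD hE x y
    simp only [LinearMap.add_apply, hD x y, hE x y, map_add, LinearMap.add_apply]
    abel
  zero_mem' := by intro x y; simp
  smul_mem' := by
    intro c D hD x y
    simp only [LinearMap.smul_apply, hD x y, map_smul, LinearMap.map_smul₂,
      LinearMap.smul_apply, smul_add]

/-- The grading subspaces: `g_0 = ℂ X_2`, `g_1 = ⟨X_3,…,X_{2p}⟩`, `g_2 = ℂ X_1`,
and `g_m = 0` otherwise. -/
def gr (p : ℕ) : ℤ → Submodule ℂ (V p) := fun m =>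
  if m = 0 then Submodule.span ℂ {X p 2}
  else if m = 1 then Submodule.span ℂ {v | ∃ j, 3 ≤ j ∧ j ≤ 2*p ∧ v = X p j}
  else if m = 2 then Submodule.span ℂ {X p 1}
  else ⊥

/-- The space of 2-cocycles of `F_φ` with coefficients in the adjoint module
(2-cochains are alternating bilinear maps). -/
def Z2 (p : ℕ) (φ : ℕ → ℂ) : Submodule ℂ (Bil p) where
  carrier := {ψ | (∀ x, ψ x x = 0) ∧
    ∀ x y z, mu p φ x (ψ y z) - mu p φ y (ψ x z) + mu p φ z (ψ x y)
      - ψ (mu p φ x y) z + ψ (mu p φ x z) y - ψ (mu p φ y z) x = 0}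
  add_mem' := by
    rintro ψ₁ ψ₂ ⟨h₁a, h₁c⟩ ⟨h₂a, h₂c⟩
    constructor
    · intro x; simp [h₁a x, h₂a x]
    · intro x y z
      have e₁ := h₁c x y z
      have e₂ := h₂c x y z
      simp only [LinearMap.add_apply, map_add]
      rw [← sub_eq_zero] at *
      simp only [sub_zero] at *
      linear_combination (norm := module) e₁ + e₂
  zero_mem' := by
    constructor
    · intro x; simp
    · intro x y z; simp
  smul_mem' := by
    rintro c ψ ⟨ha, hc⟩
    constructor
    · intro x; simp [ha x]
    · intro x y z
      have e := hc x y z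
      simp only [LinearMap.smul_apply, map_smul]
      linear_combination (norm := module) c • e

/-- The space of 2-coboundaries of `F_φ` with coefficients in the adjoint module. -/
def B2 (p : ℕ) (φ : ℕ → ℂ) : Submodule ℂ (Bil p) where
  carrier := {ψ | ∃ f : V p →ₗ[ℂ] V p,
    ∀ x y, ψ x y = mu p φ x (f y) - mu p φ y (f x) - f (mu p φ x y)}
  add_mem' := by
    rintro ψ₁ ψ₂ ⟨f₁, h₁⟩ ⟨f₂, h₂⟩
    refine ⟨f₁ + f₂, fun x y => ?_⟩
    simp only [LinearMap.add_apply, h₁ x y, h₂ x y, map_add]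
    abel
  zero_mem' := ⟨0, by intro x y; simp⟩
  smul_mem' := by
    rintro c ψ ⟨f, h⟩
    refine ⟨c • f, fun x y => ?_⟩
    simp only [LinearMap.smul_apply, h x y, map_smul, smul_sub]

/-- The 2-cochains of degree `k` with respect to the grading `gr`. -/
def degSub (p : ℕ) (k : ℤ) : Submodule ℂ (Bil p) where
  carrier := {ψ | ∀ (a b : ℤ), ∀ x ∈ gr p a, ∀ y ∈ gr p b, ψ x y ∈ gr p (a + b + k)}
  add_mem' := by
    intro ψ₁ ψ₂ h₁ h₂ a b x hx y hy
    simpa using Submodule.add_mem _ (h₁ a b x hx y hy) (h₂ a b x hx y hy)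
  zero_mem' := by intro a b x hx y hy; simp
  smul_mem' := by
    intro c ψ h a b x hx y hy
    simpa using Submodule.smul_mem _ c (h a b x hx y hy)

attribute [local instance 100] LieRing.ofAssociativeRing

/-- The derivations of `F_φ` as a Lie subalgebra of `End(ℂ^{2p})`. -/
def derLie (p : ℕ) (φ : ℕ → ℂ) : LieSubalgebra ℂ (Module.End ℂ (V p)) :=
  { derSub p (mu p φ) with
    lie_mem' := by
      intro D E hD hE
      have hD' : ∀ x y, D (mu p φ x y) = mu p φ (D x) y + mu p φ x (D y) := hD
      have hE' : ∀ x y, E (mu p φ x y) = mu p φ (E x) y + mu p φ x (E y) := hE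
      intro x y
      simp only [Ring.lie_def, LinearMap.sub_apply, Module.End.mul_apply]
      rw [hE' x y, hD' x y, map_add, map_add, hD' (E x) y, hD' x (E y),
        hE' (D x) y, hE' x (D y)]
      simp only [map_sub, LinearMap.sub_apply]
      abel }

/-- The derivation `f_i` of `F_φ` : `f_i(X_{2i+1}) = X_{2i+1}`, `f_i(X_{2i+2}) = −X_{2i+2}`. -/
def fDer (p i : ℕ) : V p →ₗ[ℂ] V p :=
  (coordL p (2*i+1)).smulRight (X p (2*i+1)) - (coordL p (2*i+2)).smulRight (X p (2*i+2))

/-- The 2-cocycle `ψ_k = ψ^{2k+1}_{2,2k+1}` :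
`(X_2,X_{2k+1}) ↦ X_{2k+1}`, `(X_2,X_{2k+2}) ↦ −X_{2k+2}`. -/
def psiK (p k : ℕ) : Bil p :=
  elem p 2 (2*k+1) (X p (2*k+1)) - elem p 2 (2*k+2) (X p (2*k+2))

/-- The 2-cocycle `ψ^2_{12}` spanning `Z²_{−2}`. -/
def psiM2 (p : ℕ) (φ : ℕ → ℂ) : Bil p :=
  elem p 1 2 (X p 2) +
    ∑ k ∈ Finset.Icc 1 (p-1),
      (elem p (2*k+1) (2*k+2) (X p 2) + elem p 1 (2*k+1) (-(φ k) • X p (2*k+1))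
        + elem p 1 (2*k+2) ((1 + φ k) • X p (2*k+2)))

/-- The 2-cocycle `ψ^1_{2,j}` : `(X_2,X_j) ↦ X_1`. -/
def psiTop (p j : ℕ) : Bil p := elem p 2 j (X p 1)


/-! ### Plain-function versions of the relevant spaces.
We realise spaces of (multi)linear maps as submodules of plain function spaces,
the (bi)linearity being part of the defining conditions. -/

/-- `ψ : ℂ^{2p} × ℂ^{2p} → ℂ^{2p}` is bilinear. -/
def IsBil (p : ℕ) (ψ : V p → V p → V p) : Prop :=
  (∀ x x' y, ψ (x + x') y = ψ x y + ψ x' y) ∧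
  (∀ (c : ℂ) (x y), ψ (c • x) y = c • ψ x y) ∧
  (∀ x y y', ψ x (y + y') = ψ x y + ψ x y') ∧
  (∀ (c : ℂ) (x y), ψ x (c • y) = c • ψ x y)

/-- The space of derivations of a bilinear bracket `B` on `ℂ^{2p}`, realised inside
the space of all maps `ℂ^{2p} → ℂ^{2p}` (linearity is part of the conditions). -/
def derF (p : ℕ) (B : Bil p) : Submodule ℂ (V p → V p) where
  carrier := {D | (∀ x y, D (x + y) = D x + D y) ∧ (∀ (c : ℂ) (x), D (c • x) = c • D x) ∧
    ∀ x y, D (B x y) = B (D x) y + B x (D y)}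
  add_mem' := by
    rintro D E ⟨hDa, hDs, hDd⟩ ⟨hEa, hEs, hEd⟩
    refine ⟨fun x y => ?_, fun c x => ?_, fun x y => ?_⟩
    · simp only [Pi.add_apply, hDa, hEa]; abel
    · simp only [Pi.add_apply, hDs, hEs, smul_add]
    · simp only [Pi.add_apply, hDd x y, hEd x y, map_add, LinearMap.add_apply]; abel
  zero_mem' := by
    refine ⟨fun x y => ?_, fun c x => ?_, fun x y => ?_⟩ <;> simp
  smul_mem' := by
    rintro c D ⟨hDa, hDs, hDd⟩
    refine ⟨fun x y => ?_, fun c' x => ?_, fun x y => ?_⟩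
    · simp only [Pi.smul_apply, hDa, smul_add]
    · simp only [Pi.smul_apply, hDs, smul_comm c c']
    · simp only [Pi.smul_apply, hDd x y, map_smul, LinearMap.smul_apply, smul_add]

/-- The space of inner derivations `ad(v) = B(v,·)` of a bilinear bracket `B`. -/
def innerF (p : ℕ) (B : Bil p) : Submodule ℂ (V p → V p) where
  carrier := {D | ∃ v, D = fun y => B v y}
  add_mem' := by
    rintro D E ⟨v, rfl⟩ ⟨w, rfl⟩
    exact ⟨v + w, by funext y; simp [map_add]⟩
  zero_mem' := ⟨0, by funext y; simp⟩
  smul_mem' := by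
    rintro c D ⟨v, rfl⟩
    exact ⟨c • v, by funext y; simp [map_smul]⟩

/-- The space of 2-cocycles of `F_φ` with coefficients in the adjoint module;
2-cochains are alternating bilinear maps `ℂ^{2p} × ℂ^{2p} → ℂ^{2p}`. -/
def Z2F (p : ℕ) (φ : ℕ → ℂ) : Submodule ℂ (V p → V p → V p) where
  carrier := {ψ | IsBil p ψ ∧ (∀ x, ψ x x = 0) ∧
    ∀ x y z, mu p φ x (ψ y z) - mu p φ y (ψ x z) + mu p φ z (ψ x y)
      - ψ (mu p φ x y) z + ψ (mu p φ x z) y - ψ (mu p φ y z) x = 0}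
  add_mem' := by
    rintro ψ₁ ψ₂ ⟨⟨hb₁, hb₂, hb₃, hb₄⟩, ha, hc⟩ ⟨⟨hb₁', hb₂', hb₃', hb₄'⟩, ha', hc'⟩
    refine ⟨⟨fun x x' y => ?_, fun c x y => ?_, fun x y y' => ?_, fun c x y => ?_⟩,
      fun x => ?_, fun x y z => ?_⟩
    · simp only [Pi.add_apply, hb₁, hb₁']; abel
    · simp only [Pi.add_apply, hb₂, hb₂', smul_add]
    · simp only [Pi.add_apply, hb₃, hb₃']; abel
    · simp only [Pi.add_apply, hb₄, hb₄', smul_add]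
    · simp only [Pi.add_apply, ha x, ha' x]; abel
    · have e := hc x y z
      have e' := hc' x y z
      simp only [Pi.add_apply, map_add]
      linear_combination (norm := module) e + e'
  zero_mem' := by
    refine ⟨⟨fun x x' y => ?_, fun c x y => ?_, fun x y y' => ?_, fun c x y => ?_⟩,
      fun x => ?_, fun x y z => ?_⟩ <;> simp
  smul_mem' := by
    rintro c ψ ⟨⟨hb₁, hb₂, hb₃, hb₄⟩, ha, hc⟩
    refine ⟨⟨fun x x' y => ?_, fun c' x y => ?_, fun x y y' => ?_, fun c' x y => ?_⟩,
      fun x => ?_, fun x y z => ?_⟩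
    · simp only [Pi.smul_apply, hb₁, smul_add]
    · simp only [Pi.smul_apply, hb₂, smul_comm c c']
    · simp only [Pi.smul_apply, hb₃, smul_add]
    · simp only [Pi.smul_apply, hb₄, smul_comm c c']
    · simp only [Pi.smul_apply, ha x, smul_zero]
    · have e := hc x y z
      simp only [Pi.smul_apply, map_smul]
      linear_combination (norm := module) c • e

/-- The space of 2-coboundaries of `F_φ` with coefficients in the adjoint module. -/
def B2F (p : ℕ) (φ : ℕ → ℂ) : Submodule ℂ (V p → V p → V p) where
  carrier := {ψ | ∃ f : V p →ₗ[ℂ] V p,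
    ∀ x y, ψ x y = mu p φ x (f y) - mu p φ y (f x) - f (mu p φ x y)}
  add_mem' := by
    rintro ψ₁ ψ₂ ⟨f₁, h₁⟩ ⟨f₂, h₂⟩
    refine ⟨f₁ + f₂, fun x y => ?_⟩
    simp only [Pi.add_apply, h₁ x y, h₂ x y, map_add, LinearMap.add_apply]
    abel
  zero_mem' := ⟨0, by intro x y; simp⟩
  smul_mem' := by
    rintro c ψ ⟨f, h⟩
    refine ⟨c • f, fun x y => ?_⟩
    simp only [Pi.smul_apply, h x y, map_smul, LinearMap.smul_apply, smul_sub]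

/-- The 2-cochains of degree `k` with respect to the grading `gr`. -/
def degF (p : ℕ) (k : ℤ) : Submodule ℂ (V p → V p → V p) where
  carrier := {ψ | ∀ (a b : ℤ), ∀ x ∈ gr p a, ∀ y ∈ gr p b, ψ x y ∈ gr p (a + b + k)}
  add_mem' := by
    intro ψ₁ ψ₂ h₁ h₂ a b x hx y hy
    simpa using Submodule.add_mem _ (h₁ a b x hx y hy) (h₂ a b x hx y hy)
  zero_mem' := by intro a b x hx y hy; simp
  smul_mem' := by
    intro c ψ h a b x hx y hy
    simpa using Submodule.smul_mem _ c (h a b x hx y hy)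

/-- A bilinear map, viewed as a plain function. -/
def toF (p : ℕ) (B : Bil p) : V p → V p → V p := fun x y => B x y
/-!
The derivation identity on the pairs `(X₂, X_j)` compares `D` with `ad X₂`, which is diagonal with
eigenvalues `1, 0, -φ_k, 1 + φ_k` on `X₁, X₂, X_{2k+1}, X_{2k+2}`; the `Ω₁` conditions make the
relevant eigenvalue differences nonzero, which forces `D = ad w + ∑ c_k f_k`. Since
`⁅D, ad w⁆ = ad (D w)`, the `f_k` commute, and every derivation maps into the Heisenberg ideal
`𝔫 = ⟨X₁, X₃, …, X_{2p}⟩`, the first derived algebra lies in `ad 𝔫`; as `[𝔫, 𝔫] = ℂ X₁` is central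
in `𝔫`, the second lies in `ℂ ad X₁` and the third vanishes. Finally
`⁅⁅ad X₂, ad X₃⁆, ⁅ad X₂, ad X₄⁆⁆ = φ₁ (1 + φ₁) ad X₁ ≠ 0`.
-/

theorem LieAlgebra.derivedSeries_succ_le_of_lie_mem {R L : Type*} [CommRing R] [LieRing L]
    [LieAlgebra R L] {k : ℕ} {S T : Submodule R L}
    (hk : (derivedSeries R L k).toSubmodule ≤ S)
    (hST : ∀ x ∈ S, ∀ y ∈ S, ⁅x, y⁆ ∈ T) :
    (derivedSeries R L (k+1)).toSubmodule ≤ T := by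
  rw [derivedSeries_def, derivedSeriesOfIdeal_succ, LieSubmodule.lieIdeal_oper_eq_linear_span',
    Submodule.span_le]
  rintro _ ⟨x, hx, y, hy, rfl⟩
  exact hST x (hk hx) y (hk hy)

theorem LieAlgebra.lie_lie_mem_derivedSeries_two {R L : Type*} [CommRing R] [LieRing L]
    [LieAlgebra R L] (a b c d : L) : ⁅⁅a, b⁆, ⁅c, d⁆⁆ ∈ derivedSeries R L 2 := by
  rw [derivedSeries_def, derivedSeriesOfIdeal_succ, derivedSeriesOfIdeal_succ,
    derivedSeriesOfIdeal_zero]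
  exact LieSubmodule.lie_mem_lie
    (LieSubmodule.lie_mem_lie (LieSubmodule.mem_top a) (LieSubmodule.mem_top b))
    (LieSubmodule.lie_mem_lie (LieSubmodule.mem_top c) (LieSubmodule.mem_top d))

section AvoidsOmega1

variable {p : ℕ} {φ : ℕ → ℂ} (hΩ : AvoidsOmega1 p φ)
include hΩ

theorem AvoidsOmega1.ne_zero {k : ℕ} (hk : k ∈ Finset.Icc 1 (p-1)) : φ k ≠ 0 :=
  have hk := Finset.mem_Icc.mp hk
  (hΩ k k hk.1 hk.2 hk.1 hk.2).2.2.2.1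

theorem AvoidsOmega1.one_add_ne_zero {k : ℕ} (hk : k ∈ Finset.Icc 1 (p-1)) : 1 + φ k ≠ 0 :=
  have hk := Finset.mem_Icc.mp hk
  fun h => (hΩ k k hk.1 hk.2 hk.1 hk.2).2.2.2.2.1 (by linear_combination h)

theorem AvoidsOmega1.ne {j k : ℕ} (hj : j ∈ Finset.Icc 1 (p-1)) (hk : k ∈ Finset.Icc 1 (p-1))
    (hjk : j ≠ k) : φ j ≠ φ k :=
  have hj := Finset.mem_Icc.mp hj
  have hk := Finset.mem_Icc.mp hk
  (hΩ j k hj.1 hj.2 hk.1 hk.2).2.2.1 hjk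

theorem AvoidsOmega1.one_add_add_ne_zero {j k : ℕ} (hj : j ∈ Finset.Icc 1 (p-1))
    (hk : k ∈ Finset.Icc 1 (p-1)) : 1 + φ j + φ k ≠ 0 :=
  have hj := Finset.mem_Icc.mp hj
  have hk := Finset.mem_Icc.mp hk
  (hΩ j k hj.1 hj.2 hk.1 hk.2).1

end AvoidsOmega1

namespace Fphi

open Finset

lemma lie_apply_eq_of_mem_derSub {p : ℕ} {B : Bil p} {D : Module.End ℂ (V p)}
    (hD : D ∈ derSub p B) (w : V p) : ⁅D, B w⁆ = B (D w) := by
  refine LinearMap.ext fun v => ?_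
  simp only [Ring.lie_def, LinearMap.sub_apply, Module.End.mul_apply]
  rw [hD w v]
  abel

def coeffOne (p : ℕ) (x y : V p) : ℂ :=
  -(coordL p 1 x * coordL p 2 y - coordL p 2 x * coordL p 1 y)
    - ∑ k ∈ Icc 1 (p-1), (coordL p (2*k+1) x * coordL p (2*k+2) y
        - coordL p (2*k+2) x * coordL p (2*k+1) y)

def coeffOdd (p : ℕ) (φ : ℕ → ℂ) (k : ℕ) (x y : V p) : ℂ :=
  -(φ k) * (coordL p 2 x * coordL p (2*k+1) y - coordL p (2*k+1) x * coordL p 2 y)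

def coeffEven (p : ℕ) (φ : ℕ → ℂ) (k : ℕ) (x y : V p) : ℂ :=
  (1 + φ k) * (coordL p 2 x * coordL p (2*k+2) y - coordL p (2*k+2) x * coordL p 2 y)

def ofCoords (p : ℕ) (c1 c2 : ℂ) (a b : ℕ → ℂ) : V p :=
  c1 • X p 1 + c2 • X p 2 + ∑ k ∈ Icc 1 (p-1), (a k • X p (2*k+1) + b k • X p (2*k+2))

lemma coordL_apply (p j : ℕ) (h1 : 1 ≤ j) (h2 : j ≤ 2*p) (x : V p) :
    coordL p j x = x ⟨j-1, by omega⟩ := by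
  rw [coordL, dif_pos (by omega : j - 1 < 2*p)]; rfl

lemma coordL_X {p a : ℕ} (b : ℕ) (h1 : 1 ≤ a) (h2 : a ≤ 2*p) :
    coordL p a (X p b) = if a = b then 1 else 0 := by
  rw [coordL_apply p a h1 h2]
  show (if (a-1) + 1 = b then (1:ℂ) else 0) = _
  rw [Nat.sub_add_cancel h1]

lemma coordL_X_self (p a : ℕ) (h1 : 1 ≤ a) (h2 : a ≤ 2*p) : coordL p a (X p a) = 1 := by
  rw [coordL_X a h1 h2, if_pos rfl]

lemma coordL_X_of_ne (p a b : ℕ) (h1 : 1 ≤ a) (h2 : a ≤ 2*p) (hne : a ≠ b) :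
    coordL p a (X p b) = 0 := by
  rw [coordL_X b h1 h2, if_neg hne]

lemma exists_eq_odd_or_eq_even {p j : ℕ} (h1 : 1 ≤ j) (h2 : j ≤ 2*p) :
    j = 1 ∨ j = 2 ∨ ∃ k ∈ Icc 1 (p-1), j = 2*k+1 ∨ j = 2*k+2 := by
  rcases Nat.even_or_odd j with ⟨m, hm⟩ | ⟨m, hm⟩
  · rcases Nat.lt_or_ge m 2 with hm2 | hm2
    · omega
    · exact Or.inr (Or.inr ⟨m - 1, Finset.mem_Icc.mpr (by omega), Or.inr (by omega)⟩)
  · rcases Nat.lt_or_ge m 1 with hm1 | hm1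
    · omega
    · exact Or.inr (Or.inr ⟨m, Finset.mem_Icc.mpr (by omega), Or.inl (by omega)⟩)

lemma ext_coordL {p : ℕ} {v w : V p} (h1 : coordL p 1 v = coordL p 1 w)
    (h2 : coordL p 2 v = coordL p 2 w)
    (hodd : ∀ k ∈ Icc 1 (p-1), coordL p (2*k+1) v = coordL p (2*k+1) w)
    (heven : ∀ k ∈ Icc 1 (p-1), coordL p (2*k+2) v = coordL p (2*k+2) w) : v = w := by
  funext i
  have hj : ∀ j, 1 ≤ j → j ≤ 2*p → coordL p j v = coordL p j w := fun j hj1 hj2 => by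
    rcases exists_eq_odd_or_eq_even hj1 hj2 with rfl | rfl | ⟨k, hk, rfl | rfl⟩
    exacts [h1, h2, hodd k hk, heven k hk]
  simpa [coordL_apply p (i+1) (by omega) (by omega)] using hj (i+1) (by omega) (by omega)

lemma basisFun_eq_X {p : ℕ} (i : Fin (2*p)) :
    Pi.basisFun ℂ (Fin (2*p)) i = X p ((i : ℕ) + 1) := by
  funext i'
  simp only [Pi.basisFun_apply, Pi.single_apply, X, Nat.add_right_cancel_iff, Fin.val_inj]

lemma End.ext_X {p : ℕ} {f g : Module.End ℂ (V p)} (h1 : f (X p 1) = g (X p 1))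
    (h2 : f (X p 2) = g (X p 2))
    (hodd : ∀ k ∈ Icc 1 (p-1), f (X p (2*k+1)) = g (X p (2*k+1)))
    (heven : ∀ k ∈ Icc 1 (p-1), f (X p (2*k+2)) = g (X p (2*k+2))) : f = g := by
  refine Module.Basis.ext (Pi.basisFun ℂ (Fin (2*p))) fun i => ?_
  rw [basisFun_eq_X]
  rcases exists_eq_odd_or_eq_even (p := p) (j := (i : ℕ) + 1) (by omega) (by omega)
    with h | h | ⟨k, hk, h | h⟩ <;> rw [h]
  exacts [h1, h2, hodd k hk, heven k hk]

lemma elem_apply (p a b : ℕ) (v : V p) (x y : V p) :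
    elem p a b v x y = (coordL p a x * coordL p b y - coordL p b x * coordL p a y) • v := by
  simp [elem, smul_smul, sub_smul]

lemma mu_apply_eq_ofCoords {p : ℕ} (φ : ℕ → ℂ) (x y : V p) :
    mu p φ x y = ofCoords p (coeffOne p x y) 0 (fun k => coeffOdd p φ k x y)
      (fun k => coeffEven p φ k x y) := by
  rw [mu]
  simp only [LinearMap.add_apply, LinearMap.sum_apply, elem_apply]
  rw [Finset.sum_congr rfl (fun k hk =>
    show _ = (-(coordL p (2*k+1) x * coordL p (2*k+2) y
          - coordL p (2*k+2) x * coordL p (2*k+1) y)) • X p 1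
        + (coeffOdd p φ k x y • X p (2*k+1) + coeffEven p φ k x y • X p (2*k+2)) from by
      rw [coeffOdd, coeffEven]; match_scalars <;> ring)]
  rw [Finset.sum_add_distrib, ← Finset.sum_smul, Finset.sum_neg_distrib, ofCoords, coeffOne]
  match_scalars <;> ring

lemma ofCoords_congr {p : ℕ} {c1 c2 c1' c2' : ℂ} {a b a' b' : ℕ → ℂ} (h1 : c1 = c1')
    (h2 : c2 = c2') (ha : ∀ k ∈ Icc 1 (p-1), a k = a' k)
    (hb : ∀ k ∈ Icc 1 (p-1), b k = b' k) :
    ofCoords p c1 c2 a b = ofCoords p c1' c2' a' b' := by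
  rw [ofCoords, ofCoords, h1, h2, Finset.sum_congr rfl (fun k hk => by rw [ha k hk, hb k hk])]

lemma ofCoords_add {p : ℕ} (c1 c2 d1 d2 : ℂ) (a b e f : ℕ → ℂ) :
    ofCoords p c1 c2 a b + ofCoords p d1 d2 e f
      = ofCoords p (c1+d1) (c2+d2) (fun k => a k + e k) (fun k => b k + f k) := by
  have h : ∑ k ∈ Icc 1 (p-1), ((a k + e k) • X p (2*k+1) + (b k + f k) • X p (2*k+2))
      = ∑ k ∈ Icc 1 (p-1), (a k • X p (2*k+1) + b k • X p (2*k+2))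
        + ∑ k ∈ Icc 1 (p-1), (e k • X p (2*k+1) + f k • X p (2*k+2)) := by
    rw [← Finset.sum_add_distrib]
    exact Finset.sum_congr rfl (fun k hk => by module)
  rw [ofCoords, ofCoords, ofCoords, h]
  module

lemma ofCoords_smul_X_one {p : ℕ} (c : ℂ) :
    ofCoords p c 0 (fun _ => 0) (fun _ => 0) = c • X p 1 := by
  simp [ofCoords]

lemma ofCoords_single_odd {p k : ℕ} (hk : k ∈ Icc 1 (p-1)) (c : ℂ) :
    ofCoords p 0 0 (fun j => if j = k then c else 0) (fun _ => 0) = c • X p (2*k+1) := by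
  rw [ofCoords, Finset.sum_eq_single_of_mem k hk (fun j hj hjk => by rw [if_neg hjk]; simp)]
  simp

lemma ofCoords_single_even {p k : ℕ} (hk : k ∈ Icc 1 (p-1)) (c : ℂ) :
    ofCoords p 0 0 (fun _ => 0) (fun j => if j = k then c else 0) = c • X p (2*k+2) := by
  rw [ofCoords, Finset.sum_eq_single_of_mem k hk (fun j hj hjk => by rw [if_neg hjk]; simp)]
  simp

lemma mu_eq_coeffOne_smul_X_one {p : ℕ} (φ : ℕ → ℂ) {x y : V p} (hx : coordL p 2 x = 0)
    (hy : coordL p 2 y = 0) :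
    mu p φ x y = (coeffOne p x y) • X p 1 := by
  rw [mu_apply_eq_ofCoords, ofCoords_congr rfl rfl
    (fun k hk => show coeffOdd p φ k x y = 0 from by rw [coeffOdd, hx, hy]; ring)
    (fun k hk => show coeffEven p φ k x y = 0 from by rw [coeffEven, hx, hy]; ring),
    ofCoords_smul_X_one]

lemma fDer_apply {p : ℕ} (k : ℕ) (v : V p) :
    fDer p k v = coordL p (2*k+1) v • X p (2*k+1) - coordL p (2*k+2) v • X p (2*k+2) := by
  simp [fDer]

section

variable {p : ℕ} (hp : 2 ≤ p) (φ : ℕ → ℂ)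

include hp

lemma coordL_one_ofCoords (c1 c2 : ℂ) (a b : ℕ → ℂ) :
    coordL p 1 (ofCoords p c1 c2 a b) = c1 := by
  simp (disch := first | omega | (rw [Finset.mem_Icc] at *; omega)) only
    [ofCoords, map_add, map_smul, coordL_X, ↓reduceIte, smul_eq_mul, mul_one, if_neg, mul_zero,
      add_zero, map_sum, Finset.sum_const_zero]

lemma coordL_two_ofCoords (c1 c2 : ℂ) (a b : ℕ → ℂ) :
    coordL p 2 (ofCoords p c1 c2 a b) = c2 := by
  simp (disch := first | omega | (rw [Finset.mem_Icc] at *; omega)) only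
    [ofCoords, map_add, map_smul, coordL_X, if_neg, smul_eq_mul, mul_zero, ↓reduceIte, mul_one,
      zero_add, map_sum, add_zero, Finset.sum_const_zero]

lemma coordL_odd_ofCoords (c1 c2 : ℂ) (a b : ℕ → ℂ) {k : ℕ} (hk : k ∈ Icc 1 (p-1)) :
    coordL p (2*k+1) (ofCoords p c1 c2 a b) = a k := by
  simp (disch := first | omega | (rw [Finset.mem_Icc] at *; omega)) only
    [ofCoords, map_add, map_smul, coordL_X, if_neg, smul_eq_mul, mul_zero, add_zero, map_sum,
      Nat.add_right_cancel_iff, Nat.mul_left_cancel_iff, mul_ite, mul_one, Finset.sum_ite_eq,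
      if_pos, zero_add]

lemma coordL_even_ofCoords (c1 c2 : ℂ) (a b : ℕ → ℂ) {k : ℕ} (hk : k ∈ Icc 1 (p-1)) :
    coordL p (2*k+2) (ofCoords p c1 c2 a b) = b k := by
  simp (disch := first | omega | (rw [Finset.mem_Icc] at *; omega)) only
    [ofCoords, map_add, map_smul, coordL_X, if_neg, smul_eq_mul, mul_zero, add_zero, map_sum,
      Nat.add_right_cancel_iff, Nat.mul_left_cancel_iff, mul_ite, mul_one, zero_add,
      Finset.sum_ite_eq, if_pos]

lemma eq_ofCoords_coordL (v : V p) :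
    v = ofCoords p (coordL p 1 v) (coordL p 2 v)
        (fun k => coordL p (2*k+1) v) (fun k => coordL p (2*k+2) v) :=
  ext_coordL (by rw [coordL_one_ofCoords hp]) (by rw [coordL_two_ofCoords hp])
    (fun _ hk => by rw [coordL_odd_ofCoords hp _ _ _ _ hk])
    (fun _ hk => by rw [coordL_even_ofCoords hp _ _ _ _ hk])

lemma coordL_mu_one (x y : V p) : coordL p 1 (mu p φ x y) = coeffOne p x y := by
  rw [mu_apply_eq_ofCoords, coordL_one_ofCoords hp]

lemma coordL_mu_two (x y : V p) : coordL p 2 (mu p φ x y) = 0 := by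
  rw [mu_apply_eq_ofCoords, coordL_two_ofCoords hp]

lemma coordL_mu_odd {k : ℕ} (hk : k ∈ Icc 1 (p-1)) (x y : V p) :
    coordL p (2*k+1) (mu p φ x y) = coeffOdd p φ k x y := by
  rw [mu_apply_eq_ofCoords, coordL_odd_ofCoords hp _ _ _ _ hk]

lemma coordL_mu_even {k : ℕ} (hk : k ∈ Icc 1 (p-1)) (x y : V p) :
    coordL p (2*k+2) (mu p φ x y) = coeffEven p φ k x y := by
  rw [mu_apply_eq_ofCoords, coordL_even_ofCoords hp _ _ _ _ hk]

lemma coeffOne_X_one_right (v : V p) : coeffOne p v (X p 1) = coordL p 2 v := by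
  simp (disch := first | omega | (rw [Finset.mem_Icc] at *; omega)) only
    [coeffOne, coordL_X, if_neg, mul_zero, ↓reduceIte, mul_one, zero_sub, neg_neg, sub_self,
      Finset.sum_const_zero, sub_zero]

lemma coeffOne_X_two_right (v : V p) : coeffOne p v (X p 2) = -(coordL p 1 v) := by
  simp (disch := first | omega | (rw [Finset.mem_Icc] at *; omega)) only
    [coeffOne, coordL_X, ↓reduceIte, mul_one, if_neg, mul_zero, sub_zero, sub_self,
      Finset.sum_const_zero]

lemma coeffOne_X_two_left (v : V p) : coeffOne p (X p 2) v = coordL p 1 v := by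
  simp (disch := first | omega | (rw [Finset.mem_Icc] at *; omega)) only
    [coeffOne, coordL_X, if_neg, zero_mul, ↓reduceIte, one_mul, zero_sub, neg_neg, sub_self,
      Finset.sum_const_zero, sub_zero]

lemma coeffOne_X_odd_right {k : ℕ} (hk : k ∈ Icc 1 (p-1)) (v : V p) :
    coeffOne p v (X p (2*k+1)) = coordL p (2*k+2) v := by
  simp (disch := first | omega | (rw [Finset.mem_Icc] at *; omega)) only
    [coeffOne, coordL_X, if_neg, mul_zero, sub_self, neg_zero, Nat.add_right_cancel_iff,
      Nat.mul_left_cancel_iff, mul_ite, mul_one, zero_sub, Finset.sum_neg_distrib,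
      Finset.sum_ite_eq', if_pos, neg_neg]

lemma coeffOne_X_even_right {k : ℕ} (hk : k ∈ Icc 1 (p-1)) (v : V p) :
    coeffOne p v (X p (2*k+2)) = -(coordL p (2*k+1) v) := by
  simp (disch := first | omega | (rw [Finset.mem_Icc] at *; omega)) only
    [coeffOne, coordL_X, if_neg, mul_zero, sub_self, neg_zero, Nat.add_right_cancel_iff,
      Nat.mul_left_cancel_iff, mul_ite, mul_one, sub_zero, Finset.sum_ite_eq', if_pos, zero_sub]

lemma coeffOne_X_odd_left {k : ℕ} (hk : k ∈ Icc 1 (p-1)) (v : V p) :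
    coeffOne p (X p (2*k+1)) v = -(coordL p (2*k+2) v) := by
  simp (disch := first | omega | (rw [Finset.mem_Icc] at *; omega)) only
    [coeffOne, coordL_X, if_neg, zero_mul, sub_self, neg_zero, Nat.add_right_cancel_iff,
      Nat.mul_left_cancel_iff, ite_mul, one_mul, sub_zero, Finset.sum_ite_eq', if_pos, zero_sub]

lemma coeffOdd_X_one_right {j : ℕ} (hj : j ∈ Icc 1 (p-1)) (v : V p) :
    coeffOdd p φ j v (X p 1) = 0 := by
  simp (disch := first | omega | (rw [Finset.mem_Icc] at *; omega)) only
    [coeffOdd, coordL_X, if_neg, mul_zero, sub_self]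

lemma coeffEven_X_one_right {j : ℕ} (hj : j ∈ Icc 1 (p-1)) (v : V p) :
    coeffEven p φ j v (X p 1) = 0 := by
  simp (disch := first | omega | (rw [Finset.mem_Icc] at *; omega)) only
    [coeffEven, coordL_X, if_neg, mul_zero, sub_self]

lemma coeffOdd_X_two_right {j : ℕ} (hj : j ∈ Icc 1 (p-1)) (v : V p) :
    coeffOdd p φ j v (X p 2) = φ j * coordL p (2*j+1) v := by
  simp (disch := first | omega | (rw [Finset.mem_Icc] at *; omega)) only
    [coeffOdd, coordL_X, if_neg, mul_zero, ↓reduceIte, mul_one, zero_sub]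
  ring

lemma coeffEven_X_two_right {j : ℕ} (hj : j ∈ Icc 1 (p-1)) (v : V p) :
    coeffEven p φ j v (X p 2) = -((1 + φ j) * coordL p (2*j+2) v) := by
  simp (disch := first | omega | (rw [Finset.mem_Icc] at *; omega)) only
    [coeffEven, coordL_X, if_neg, mul_zero, ↓reduceIte, mul_one, zero_sub]
  ring

lemma coeffOdd_X_two_left {j : ℕ} (hj : j ∈ Icc 1 (p-1)) (v : V p) :
    coeffOdd p φ j (X p 2) v = -(φ j) * coordL p (2*j+1) v := by
  simp (disch := first | omega | (rw [Finset.mem_Icc] at *; omega)) only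
    [coeffOdd, coordL_X, ↓reduceIte, one_mul, if_neg, zero_mul, sub_zero]

lemma coeffEven_X_two_left {j : ℕ} (hj : j ∈ Icc 1 (p-1)) (v : V p) :
    coeffEven p φ j (X p 2) v = (1 + φ j) * coordL p (2*j+2) v := by
  simp (disch := first | omega | (rw [Finset.mem_Icc] at *; omega)) only
    [coeffEven, coordL_X, ↓reduceIte, one_mul, if_neg, zero_mul, sub_zero]

lemma coeffOdd_X_odd_right {j k : ℕ} (hj : j ∈ Icc 1 (p-1)) (v : V p) :
    coeffOdd p φ j v (X p (2*k+1)) = if j = k then -(φ j) * coordL p 2 v else 0 := by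
  simp (disch := first | omega | (rw [Finset.mem_Icc] at *; omega)) only
    [coeffOdd, coordL_X, Nat.add_right_cancel_iff, Nat.mul_left_cancel_iff, mul_ite, mul_one,
      mul_zero, if_neg, sub_zero]

lemma coeffEven_X_odd_right {j : ℕ} (hj : j ∈ Icc 1 (p-1)) (k : ℕ) (v : V p) :
    coeffEven p φ j v (X p (2*k+1)) = 0 := by
  simp (disch := first | omega | (rw [Finset.mem_Icc] at *; omega)) only
    [coeffEven, coordL_X, if_neg, mul_zero, sub_self]

lemma coeffOdd_X_even_right {j k : ℕ} (hj : j ∈ Icc 1 (p-1)) (hk : k ∈ Icc 1 (p-1))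
    (v : V p) :
    coeffOdd p φ j v (X p (2*k+2)) = 0 := by
  simp (disch := first | omega | (rw [Finset.mem_Icc] at *; omega)) only
    [coeffOdd, coordL_X, Nat.add_right_cancel_iff, if_neg, mul_zero, sub_self]

lemma coeffEven_X_even_right {j k : ℕ} (hj : j ∈ Icc 1 (p-1)) (hk : k ∈ Icc 1 (p-1))
    (v : V p) :
    coeffEven p φ j v (X p (2*k+2)) = if j = k then (1 + φ j) * coordL p 2 v else 0 := by
  simp (disch := first | omega | (rw [Finset.mem_Icc] at *; omega)) only
    [coeffEven, coordL_X, Nat.add_right_cancel_iff, Nat.mul_left_cancel_iff, mul_ite, mul_one,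
      mul_zero, if_neg, sub_zero]

lemma mu_apply_X_one (v : V p) : mu p φ v (X p 1) = coordL p 2 v • X p 1 := by
  rw [mu_apply_eq_ofCoords, ofCoords_congr (coeffOne_X_one_right hp v) rfl
    (fun _ hk => coeffOdd_X_one_right hp φ hk v) (fun _ hk => coeffEven_X_one_right hp φ hk v),
    ofCoords_smul_X_one]

lemma mu_X_two_X_one : mu p φ (X p 2) (X p 1) = X p 1 := by
  rw [mu_apply_X_one hp, coordL_X_self p 2 (by omega) (by omega), one_smul]

lemma mu_X_one_X_two : mu p φ (X p 1) (X p 2) = (-1 : ℂ) • X p 1 := by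
  rw [mu_apply_eq_ofCoords, ofCoords_congr
    (show coeffOne p (X p 1) (X p 2) = -1 from by
      rw [coeffOne_X_two_right hp, coordL_X_self p 1 (by omega) (by omega)])
    rfl
    (fun k hk => show coeffOdd p φ k (X p 1) (X p 2) = 0 from by
      rw [coeffOdd_X_two_right hp φ hk]
      rw [Finset.mem_Icc] at hk
      rw [coordL_X_of_ne p (2*k+1) 1 (by omega) (by omega) (by omega)]; ring)
    (fun k hk => show coeffEven p φ k (X p 1) (X p 2) = 0 from by
      rw [coeffEven_X_two_right hp φ hk]
      rw [Finset.mem_Icc] at hk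
      rw [coordL_X_of_ne p (2*k+2) 1 (by omega) (by omega) (by omega)]; ring),
    ofCoords_smul_X_one]

lemma mu_X_two_X_odd {k : ℕ} (hk : k ∈ Icc 1 (p-1)) :
    mu p φ (X p 2) (X p (2*k+1)) = (-(φ k)) • X p (2*k+1) := by
  rw [mu_apply_eq_ofCoords, ofCoords_congr
    (show coeffOne p (X p 2) (X p (2*k+1)) = 0 from by
      rw [coeffOne_X_odd_right hp hk]
      rw [Finset.mem_Icc] at hk
      rw [coordL_X_of_ne p (2*k+2) 2 (by omega) (by omega) (by omega)])
    rfl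
    (fun j hj => show coeffOdd p φ j (X p 2) (X p (2*k+1)) = if j = k then -(φ k) else 0 from by
      rw [coeffOdd_X_odd_right hp φ hj, coordL_X_self p 2 (by omega) (by omega)]
      split_ifs with h
      · subst h; ring
      · rfl)
    (fun j hj => coeffEven_X_odd_right hp φ hj k _),
    ofCoords_single_odd hk]

lemma mu_X_two_X_even {k : ℕ} (hk : k ∈ Icc 1 (p-1)) :
    mu p φ (X p 2) (X p (2*k+2)) = (1 + φ k) • X p (2*k+2) := by
  rw [mu_apply_eq_ofCoords, ofCoords_congr
    (show coeffOne p (X p 2) (X p (2*k+2)) = 0 from by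
      rw [coeffOne_X_even_right hp hk]
      rw [Finset.mem_Icc] at hk
      rw [coordL_X_of_ne p (2*k+1) 2 (by omega) (by omega) (by omega)]; ring)
    rfl
    (fun j hj => coeffOdd_X_even_right hp φ hj hk _)
    (fun j hj => show coeffEven p φ j (X p 2) (X p (2*k+2)) = if j = k then 1 + φ k else 0 from by
      rw [coeffEven_X_even_right hp φ hj hk, coordL_X_self p 2 (by omega) (by omega)]
      split_ifs with h
      · subst h; ring
      · rfl),
    ofCoords_single_even hk]

lemma mu_X_odd_X_even {k : ℕ} (hk : k ∈ Icc 1 (p-1)) :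
    mu p φ (X p (2*k+1)) (X p (2*k+2)) = (-1 : ℂ) • X p 1 := by
  have hk' := Finset.mem_Icc.mp hk
  rw [mu_apply_eq_ofCoords, ofCoords_congr
    (show coeffOne p (X p (2*k+1)) (X p (2*k+2)) = -1 from by
      rw [coeffOne_X_even_right hp hk, coordL_X_self p (2*k+1) (by omega) (by omega)])
    rfl
    (fun j hj => coeffOdd_X_even_right hp φ hj hk _)
    (fun j hj => show coeffEven p φ j (X p (2*k+1)) (X p (2*k+2)) = 0 from by
      rw [coeffEven_X_even_right hp φ hj hk]
      split_ifs with h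
      · rw [coordL_X_of_ne p 2 (2*k+1) (by omega) (by omega) (by omega)]; ring
      · rfl),
    ofCoords_smul_X_one]

lemma coordL_two_fDer {k : ℕ} (hk : k ∈ Icc 1 (p-1)) (v : V p) :
    coordL p 2 (fDer p k v) = 0 := by
  simp (disch := first | omega | (rw [Finset.mem_Icc] at *; omega)) only
    [fDer_apply, map_sub, map_smul, coordL_X, if_neg, smul_eq_mul, mul_zero, sub_self]

lemma fDer_X_one {k : ℕ} (hk : k ∈ Icc 1 (p-1)) : fDer p k (X p 1) = 0 := by
  simp (disch := first | omega | (rw [Finset.mem_Icc] at *; omega)) only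
    [fDer_apply, coordL_X, if_neg, zero_smul, sub_self]

lemma fDer_X_two {k : ℕ} (hk : k ∈ Icc 1 (p-1)) : fDer p k (X p 2) = 0 := by
  simp (disch := first | omega | (rw [Finset.mem_Icc] at *; omega)) only
    [fDer_apply, coordL_X, if_neg, zero_smul, sub_self]

lemma fDer_X_odd {j k : ℕ} (hj : j ∈ Icc 1 (p-1)) :
    fDer p j (X p (2*k+1)) = if j = k then X p (2*k+1) else 0 := by
  simp (disch := first | omega | (rw [Finset.mem_Icc] at *; omega)) only
    [fDer_apply, coordL_X, Nat.add_right_cancel_iff, Nat.mul_left_cancel_iff, if_neg]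
  split_ifs with h <;> simp [h]

lemma fDer_X_even {j k : ℕ} (hj : j ∈ Icc 1 (p-1)) :
    fDer p j (X p (2*k+2)) = if j = k then -(X p (2*k+2)) else 0 := by
  simp (disch := first | omega | (rw [Finset.mem_Icc] at *; omega)) only
    [fDer_apply, coordL_X, Nat.add_right_cancel_iff, if_neg, Nat.mul_left_cancel_iff]
  split_ifs with h <;> simp [h]

lemma mu_mem_derSub (w : V p) : mu p φ w ∈ derSub p (mu p φ) := by
  intro x y
  rw [mu_apply_eq_ofCoords φ w (mu p φ x y), mu_apply_eq_ofCoords φ (mu p φ w x) y,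
    mu_apply_eq_ofCoords φ x (mu p φ w y), ofCoords_add]
  refine ofCoords_congr ?_ (add_zero 0).symm (fun k hk => ?_) (fun k hk => ?_)
  · simp (disch := assumption) only [coeffOne, coordL_mu_one hp φ, coordL_mu_two hp φ,
      coordL_mu_odd hp φ, coordL_mu_even hp φ]
    simp only [coeffOdd, coeffEven]
    rw [← sub_eq_zero]
    ring_nf
    -- all sums run over the same index set, so they merge into one sum of polynomial identities
    simp only [Finset.mul_sum, ← Finset.sum_neg_distrib, ← Finset.sum_sub_distrib,
      ← Finset.sum_add_distrib]
    exact Finset.sum_eq_zero fun k _ => by ring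
  · simp only [coeffOdd, coordL_mu_odd hp φ hk, coordL_mu_two hp φ]; ring
  · simp only [coeffEven, coordL_mu_even hp φ hk, coordL_mu_two hp φ]; ring

lemma commute_fDer {j k : ℕ} (hj : j ∈ Icc 1 (p-1)) (hk : k ∈ Icc 1 (p-1)) :
    Commute (fDer p j) (fDer p k) := by
  have hzero : ∀ {j k}, j ∈ Icc 1 (p-1) → k ∈ Icc 1 (p-1) → j ≠ k →
      ∀ v, fDer p j (fDer p k v) = 0 := by
    intro j k hj hk h v
    rw [fDer_apply k v, map_sub, map_smul, map_smul, fDer_X_odd hp hj, fDer_X_even hp hj,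
      if_neg h, if_neg h, smul_zero, smul_zero, sub_zero]
  by_cases h : j = k
  · rw [h]
  · refine LinearMap.ext fun v => ?_
    rw [Module.End.mul_apply, Module.End.mul_apply, hzero hj hk h, hzero hk hj (Ne.symm h)]

lemma commute_sum_fDer (c c' : ℕ → ℂ) :
    Commute (∑ k ∈ Icc 1 (p-1), c k • fDer p k) (∑ k ∈ Icc 1 (p-1), c' k • fDer p k) :=
  Commute.sum_left _ _ _ fun _ hj => Commute.sum_right _ _ _ fun _ hk =>
    ((commute_fDer hp hj hk).smul_left _).smul_right _

lemma sum_fDer_X_one (c : ℕ → ℂ) : (∑ k ∈ Icc 1 (p-1), c k • fDer p k) (X p 1) = 0 := by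
  simp only [LinearMap.sum_apply, LinearMap.smul_apply]
  exact Finset.sum_eq_zero fun k hk => by rw [fDer_X_one hp hk, smul_zero]

lemma sum_fDer_X_two (c : ℕ → ℂ) : (∑ k ∈ Icc 1 (p-1), c k • fDer p k) (X p 2) = 0 := by
  simp only [LinearMap.sum_apply, LinearMap.smul_apply]
  exact Finset.sum_eq_zero fun k hk => by rw [fDer_X_two hp hk, smul_zero]

lemma sum_fDer_X_odd (c : ℕ → ℂ) {k : ℕ} (hk : k ∈ Icc 1 (p-1)) :
    (∑ j ∈ Icc 1 (p-1), c j • fDer p j) (X p (2*k+1)) = c k • X p (2*k+1) := by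
  simp only [LinearMap.sum_apply, LinearMap.smul_apply]
  rw [Finset.sum_eq_single_of_mem k hk fun j hj hjk => by
    rw [fDer_X_odd hp hj, if_neg hjk, smul_zero], fDer_X_odd hp hk, if_pos rfl]

lemma sum_fDer_X_even (c : ℕ → ℂ) {k : ℕ} (hk : k ∈ Icc 1 (p-1)) :
    (∑ j ∈ Icc 1 (p-1), c j • fDer p j) (X p (2*k+2)) = (-c k) • X p (2*k+2) := by
  simp only [LinearMap.sum_apply, LinearMap.smul_apply]
  rw [Finset.sum_eq_single_of_mem k hk fun j hj hjk => by
    rw [fDer_X_even hp hj, if_neg hjk, smul_zero], fDer_X_even hp hk, if_pos rfl, smul_neg,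
    neg_smul]

lemma coordL_two_sum_fDer (c : ℕ → ℂ) (v : V p) :
    coordL p 2 ((∑ k ∈ Icc 1 (p-1), c k • fDer p k) v) = 0 := by
  simp only [LinearMap.sum_apply, LinearMap.smul_apply, map_sum, map_smul]
  exact Finset.sum_eq_zero fun k hk => by rw [coordL_two_fDer hp hk, smul_zero]

end

/-- The witnesses of `D = ad w + ∑ c_k f_k`: `ad (adPart p φ D)` agrees with `D` on `X₂` and `X₁`,
and `diagPart p φ D k` is then the remaining diagonal entry of `D` at `X_{2k+1}`. -/
def adPart (p : ℕ) (φ : ℕ → ℂ) (D : Module.End ℂ (V p)) : V p :=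
  ofCoords p (-(coordL p 1 (D (X p 2)))) (coordL p 1 (D (X p 1)))
    (fun k => coordL p (2*k+1) (D (X p 2)) / φ k)
    (fun k => -(coordL p (2*k+2) (D (X p 2))) / (1 + φ k))

def diagPart (p : ℕ) (φ : ℕ → ℂ) (D : Module.End ℂ (V p)) (k : ℕ) : ℂ :=
  coordL p (2*k+1) (D (X p (2*k+1))) + coordL p 1 (D (X p 1)) * φ k

section Classification

variable {p : ℕ} (hp : 2 ≤ p) {φ : ℕ → ℂ} {D : Module.End ℂ (V p)}
  (hD : D ∈ derSub p (mu p φ))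
include hp hD

lemma leibniz_X_two_X_one :
    D (X p 1) = mu p φ (D (X p 2)) (X p 1) + mu p φ (X p 2) (D (X p 1)) := by
  have h := hD (X p 2) (X p 1)
  rwa [mu_X_two_X_one hp φ] at h

lemma leibniz_X_two_X_odd {k : ℕ} (hk : k ∈ Icc 1 (p-1)) :
    (-(φ k)) • D (X p (2*k+1))
      = mu p φ (D (X p 2)) (X p (2*k+1)) + mu p φ (X p 2) (D (X p (2*k+1))) := by
  have h := hD (X p 2) (X p (2*k+1))
  rwa [mu_X_two_X_odd hp φ hk, map_smul] at h

lemma leibniz_X_two_X_even {k : ℕ} (hk : k ∈ Icc 1 (p-1)) :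
    (1 + φ k) • D (X p (2*k+2))
      = mu p φ (D (X p 2)) (X p (2*k+2)) + mu p φ (X p 2) (D (X p (2*k+2))) := by
  have h := hD (X p 2) (X p (2*k+2))
  rwa [mu_X_two_X_even hp φ hk, map_smul] at h

lemma coordL_two_der_X_two : coordL p 2 (D (X p 2)) = 0 := by
  have h := congrArg (coordL p 1) (leibniz_X_two_X_one hp hD)
  rw [map_add, coordL_mu_one hp φ, coordL_mu_one hp φ, coeffOne_X_one_right hp,
    coeffOne_X_two_left hp] at h
  linear_combination -h

lemma der_X_one (hΩ : AvoidsOmega1 p φ) : D (X p 1) = coordL p 1 (D (X p 1)) • X p 1 := by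
  have rel := leibniz_X_two_X_one hp hD
  refine (eq_ofCoords_coordL hp _).trans ((ofCoords_congr rfl ?_ (fun k hk => ?_)
    (fun k hk => ?_)).trans (ofCoords_smul_X_one _))
  · simpa [coordL_mu_two hp φ] using congrArg (coordL p 2) rel
  · have h := congrArg (coordL p (2*k+1)) rel
    rw [map_add, coordL_mu_odd hp φ hk, coordL_mu_odd hp φ hk, coeffOdd_X_one_right hp φ hk,
      coeffOdd_X_two_left hp φ hk] at h
    have h' : (1 + φ k) * coordL p (2*k+1) (D (X p 1)) = 0 := by linear_combination h
    exact (mul_eq_zero.mp h').resolve_left (hΩ.one_add_ne_zero hk)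
  · have h := congrArg (coordL p (2*k+2)) rel
    rw [map_add, coordL_mu_even hp φ hk, coordL_mu_even hp φ hk, coeffEven_X_one_right hp φ hk,
      coeffEven_X_two_left hp φ hk] at h
    have h' : φ k * coordL p (2*k+2) (D (X p 1)) = 0 := by linear_combination -h
    exact (mul_eq_zero.mp h').resolve_left (hΩ.ne_zero hk)

lemma coordL_one_der_X_odd (hΩ : AvoidsOmega1 p φ) {k : ℕ} (hk : k ∈ Icc 1 (p-1)) :
    coordL p 1 (D (X p (2*k+1))) = -(coordL p (2*k+2) (D (X p 2))) / (1 + φ k) := by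
  have h := congrArg (coordL p 1) (leibniz_X_two_X_odd hp hD hk)
  rw [map_smul, map_add, coordL_mu_one hp φ, coordL_mu_one hp φ, coeffOne_X_odd_right hp hk,
    coeffOne_X_two_left hp, smul_eq_mul] at h
  rw [eq_div_iff (hΩ.one_add_ne_zero hk)]
  linear_combination -h

lemma coordL_two_der_X_odd (hΩ : AvoidsOmega1 p φ) {k : ℕ} (hk : k ∈ Icc 1 (p-1)) :
    coordL p 2 (D (X p (2*k+1))) = 0 := by
  have h := congrArg (coordL p 2) (leibniz_X_two_X_odd hp hD hk)
  rw [map_smul, map_add, coordL_mu_two hp φ, coordL_mu_two hp φ, smul_eq_mul] at h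
  have h' : φ k * coordL p 2 (D (X p (2*k+1))) = 0 := by linear_combination -h
  exact (mul_eq_zero.mp h').resolve_left (hΩ.ne_zero hk)

lemma coordL_odd_der_X_odd (hΩ : AvoidsOmega1 p φ) {j k : ℕ} (hj : j ∈ Icc 1 (p-1))
    (hk : k ∈ Icc 1 (p-1)) (hjk : j ≠ k) : coordL p (2*j+1) (D (X p (2*k+1))) = 0 := by
  have h := congrArg (coordL p (2*j+1)) (leibniz_X_two_X_odd hp hD hk)
  rw [map_smul, map_add, coordL_mu_odd hp φ hj, coordL_mu_odd hp φ hj,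
    coeffOdd_X_odd_right hp φ hj, if_neg hjk, coeffOdd_X_two_left hp φ hj, smul_eq_mul] at h
  have h' : (φ j - φ k) * coordL p (2*j+1) (D (X p (2*k+1))) = 0 := by linear_combination h
  exact (mul_eq_zero.mp h').resolve_left (sub_ne_zero.mpr (hΩ.ne hj hk hjk))

lemma coordL_even_der_X_odd (hΩ : AvoidsOmega1 p φ) {j k : ℕ} (hj : j ∈ Icc 1 (p-1))
    (hk : k ∈ Icc 1 (p-1)) : coordL p (2*j+2) (D (X p (2*k+1))) = 0 := by
  have h := congrArg (coordL p (2*j+2)) (leibniz_X_two_X_odd hp hD hk)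
  rw [map_smul, map_add, coordL_mu_even hp φ hj, coordL_mu_even hp φ hj,
    coeffEven_X_odd_right hp φ hj, coeffEven_X_two_left hp φ hj, smul_eq_mul] at h
  have h' : (1 + φ j + φ k) * coordL p (2*j+2) (D (X p (2*k+1))) = 0 := by
    linear_combination -h
  exact (mul_eq_zero.mp h').resolve_left (hΩ.one_add_add_ne_zero hj hk)

lemma coordL_one_der_X_even (hΩ : AvoidsOmega1 p φ) {k : ℕ} (hk : k ∈ Icc 1 (p-1)) :
    coordL p 1 (D (X p (2*k+2))) = -(coordL p (2*k+1) (D (X p 2))) / φ k := by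
  have h := congrArg (coordL p 1) (leibniz_X_two_X_even hp hD hk)
  rw [map_smul, map_add, coordL_mu_one hp φ, coordL_mu_one hp φ, coeffOne_X_even_right hp hk,
    coeffOne_X_two_left hp, smul_eq_mul] at h
  rw [eq_div_iff (hΩ.ne_zero hk)]
  linear_combination h

lemma coordL_two_der_X_even (hΩ : AvoidsOmega1 p φ) {k : ℕ} (hk : k ∈ Icc 1 (p-1)) :
    coordL p 2 (D (X p (2*k+2))) = 0 := by
  have h := congrArg (coordL p 2) (leibniz_X_two_X_even hp hD hk)
  rw [map_smul, map_add, coordL_mu_two hp φ, coordL_mu_two hp φ, smul_eq_mul] at h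
  have h' : (1 + φ k) * coordL p 2 (D (X p (2*k+2))) = 0 := by linear_combination h
  exact (mul_eq_zero.mp h').resolve_left (hΩ.one_add_ne_zero hk)

lemma coordL_odd_der_X_even (hΩ : AvoidsOmega1 p φ) {j k : ℕ} (hj : j ∈ Icc 1 (p-1))
    (hk : k ∈ Icc 1 (p-1)) : coordL p (2*j+1) (D (X p (2*k+2))) = 0 := by
  have h := congrArg (coordL p (2*j+1)) (leibniz_X_two_X_even hp hD hk)
  rw [map_smul, map_add, coordL_mu_odd hp φ hj, coordL_mu_odd hp φ hj,
    coeffOdd_X_even_right hp φ hj hk, coeffOdd_X_two_left hp φ hj, smul_eq_mul] at h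
  have h' : (1 + φ j + φ k) * coordL p (2*j+1) (D (X p (2*k+2))) = 0 := by
    linear_combination h
  exact (mul_eq_zero.mp h').resolve_left (hΩ.one_add_add_ne_zero hj hk)

lemma coordL_even_der_X_even (hΩ : AvoidsOmega1 p φ) {j k : ℕ} (hj : j ∈ Icc 1 (p-1))
    (hk : k ∈ Icc 1 (p-1)) (hjk : j ≠ k) : coordL p (2*j+2) (D (X p (2*k+2))) = 0 := by
  have h := congrArg (coordL p (2*j+2)) (leibniz_X_two_X_even hp hD hk)
  rw [map_smul, map_add, coordL_mu_even hp φ hj, coordL_mu_even hp φ hj,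
    coeffEven_X_even_right hp φ hj hk, if_neg hjk, coeffEven_X_two_left hp φ hj,
    smul_eq_mul] at h
  have h' : (φ k - φ j) * coordL p (2*j+2) (D (X p (2*k+2))) = 0 := by linear_combination h
  exact (mul_eq_zero.mp h').resolve_left (sub_ne_zero.mpr (hΩ.ne hk hj (Ne.symm hjk)))

lemma coordL_even_der_X_even_self {k : ℕ} (hk : k ∈ Icc 1 (p-1)) :
    coordL p (2*k+2) (D (X p (2*k+2)))
      = coordL p 1 (D (X p 1)) - coordL p (2*k+1) (D (X p (2*k+1))) := by
  have h := hD (X p (2*k+1)) (X p (2*k+2))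
  rw [mu_X_odd_X_even hp φ hk, map_smul] at h
  have h1 := congrArg (coordL p 1) h
  rw [map_smul, map_add, coordL_mu_one hp φ, coordL_mu_one hp φ, coeffOne_X_even_right hp hk,
    coeffOne_X_odd_left hp hk, smul_eq_mul] at h1
  linear_combination h1

lemma der_X_two_eq_mu_adPart (hΩ : AvoidsOmega1 p φ) :
    D (X p 2) = mu p φ (adPart p φ D) (X p 2) := by
  refine ext_coordL ?_ ?_ (fun k hk => ?_) (fun k hk => ?_)
  · rw [coordL_mu_one hp φ, coeffOne_X_two_right hp, adPart, coordL_one_ofCoords hp, neg_neg]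
  · rw [coordL_mu_two hp φ, coordL_two_der_X_two hp hD]
  · rw [coordL_mu_odd hp φ hk, coeffOdd_X_two_right hp φ hk, adPart,
      coordL_odd_ofCoords hp _ _ _ _ hk]
    field_simp [hΩ.ne_zero hk]
  · rw [coordL_mu_even hp φ hk, coeffEven_X_two_right hp φ hk, adPart,
      coordL_even_ofCoords hp _ _ _ _ hk]
    field_simp [hΩ.one_add_ne_zero hk]

lemma der_X_odd_eq_mu_adPart_add (hΩ : AvoidsOmega1 p φ) {m : ℕ} (hm : m ∈ Icc 1 (p-1)) :
    D (X p (2*m+1))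
      = mu p φ (adPart p φ D) (X p (2*m+1)) + diagPart p φ D m • X p (2*m+1) := by
  rw [mu_apply_eq_ofCoords, ← ofCoords_single_odd hm, ofCoords_add, eq_ofCoords_coordL hp (D _)]
  refine ofCoords_congr ?_ ?_ (fun j hj => ?_) (fun j hj => ?_)
  · rw [coeffOne_X_odd_right hp hm, adPart, coordL_even_ofCoords hp _ _ _ _ hm,
      coordL_one_der_X_odd hp hD hΩ hm, add_zero]
  · rw [coordL_two_der_X_odd hp hD hΩ hm, add_zero]
  · rw [coeffOdd_X_odd_right hp φ hj, adPart, coordL_two_ofCoords hp]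
    by_cases h : j = m
    · subst h; rw [if_pos rfl, if_pos rfl, diagPart]; ring
    · rw [if_neg h, if_neg h, add_zero]; exact coordL_odd_der_X_odd hp hD hΩ hj hm h
  · rw [coeffEven_X_odd_right hp φ hj, coordL_even_der_X_odd hp hD hΩ hj hm, add_zero]

lemma der_X_even_eq_mu_adPart_add (hΩ : AvoidsOmega1 p φ) {m : ℕ} (hm : m ∈ Icc 1 (p-1)) :
    D (X p (2*m+2))
      = mu p φ (adPart p φ D) (X p (2*m+2)) + (-diagPart p φ D m) • X p (2*m+2) := by
  rw [mu_apply_eq_ofCoords, ← ofCoords_single_even hm, ofCoords_add, eq_ofCoords_coordL hp (D _)]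
  refine ofCoords_congr ?_ ?_ (fun j hj => ?_) (fun j hj => ?_)
  · rw [coeffOne_X_even_right hp hm, adPart, coordL_odd_ofCoords hp _ _ _ _ hm,
      coordL_one_der_X_even hp hD hΩ hm]
    ring
  · rw [coordL_two_der_X_even hp hD hΩ hm, add_zero]
  · rw [coeffOdd_X_even_right hp φ hj hm, coordL_odd_der_X_even hp hD hΩ hj hm, add_zero]
  · rw [coeffEven_X_even_right hp φ hj hm, adPart, coordL_two_ofCoords hp]
    by_cases h : j = m
    · subst h; rw [if_pos rfl, if_pos rfl, coordL_even_der_X_even_self hp hD hj, diagPart]; ring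
    · rw [if_neg h, if_neg h, add_zero]; exact coordL_even_der_X_even hp hD hΩ hj hm h

theorem exists_eq_mu_add_sum_fDer (hΩ : AvoidsOmega1 p φ) :
    ∃ (w : V p) (c : ℕ → ℂ), D = mu p φ w + ∑ k ∈ Icc 1 (p-1), c k • fDer p k := by
  refine ⟨adPart p φ D, diagPart p φ D, End.ext_X ?_ ?_ (fun m hm => ?_) (fun m hm => ?_)⟩ <;>
    rw [LinearMap.add_apply]
  · rw [sum_fDer_X_one hp, add_zero, mu_apply_X_one hp, adPart, coordL_two_ofCoords hp]
    exact der_X_one hp hD hΩ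
  · rw [sum_fDer_X_two hp, add_zero]
    exact der_X_two_eq_mu_adPart hp hD hΩ
  · rw [sum_fDer_X_odd hp _ hm]
    exact der_X_odd_eq_mu_adPart_add hp hD hΩ hm
  · rw [sum_fDer_X_even hp _ hm]
    exact der_X_even_eq_mu_adPart_add hp hD hΩ hm

end Classification

section DerivedSeries

variable {p : ℕ} (hp : 2 ≤ p) {φ : ℕ → ℂ}
include hp

lemma coordL_two_apply_of_mem_derSub (hΩ : AvoidsOmega1 p φ) {D : Module.End ℂ (V p)}
    (hD : D ∈ derSub p (mu p φ)) (v : V p) : coordL p 2 (D v) = 0 := by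
  obtain ⟨w, c, rfl⟩ := exists_eq_mu_add_sum_fDer hp hD hΩ
  rw [LinearMap.add_apply, map_add, coordL_mu_two hp φ, coordL_two_sum_fDer hp, add_zero]

lemma exists_lie_eq_mu (hΩ : AvoidsOmega1 p φ) {D E : Module.End ℂ (V p)}
    (hD : D ∈ derSub p (mu p φ)) (hE : E ∈ derSub p (mu p φ)) :
    ∃ u, coordL p 2 u = 0 ∧ ⁅D, E⁆ = mu p φ u := by
  obtain ⟨w, c, hDw⟩ := exists_eq_mu_add_sum_fDer hp hD hΩ
  obtain ⟨w', c', hEw⟩ := exists_eq_mu_add_sum_fDer hp hE hΩ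
  set F := ∑ k ∈ Icc 1 (p-1), c k • fDer p k
  set F' := ∑ k ∈ Icc 1 (p-1), c' k • fDer p k
  have hF' : F' ∈ derSub p (mu p φ) := by
    rw [show F' = E - mu p φ w' by rw [hEw]; abel]
    exact sub_mem hE (mu_mem_derSub hp φ w')
  refine ⟨D w' - F' w, ?_, ?_⟩
  · rw [map_sub, coordL_two_apply_of_mem_derSub hp hΩ hD,
      coordL_two_apply_of_mem_derSub hp hΩ hF', sub_zero]
  have hDF' : ⁅D, F'⁆ = -mu p φ (F' w) := by
    rw [hDw, add_lie, ← lie_skew, lie_apply_eq_of_mem_derSub hF', Ring.lie_def,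
      (commute_sum_fDer hp c c').eq, sub_self, add_zero]
  rw [hEw, lie_add, lie_apply_eq_of_mem_derSub hD, hDF', map_sub, sub_eq_add_neg]

def ad (φ : ℕ → ℂ) : V p →ₗ[ℂ] derLie p φ where
  toFun w := ⟨mu p φ w, mu_mem_derSub hp φ w⟩
  map_add' v w := Subtype.ext (map_add (mu p φ) v w)
  map_smul' c w := Subtype.ext (map_smul (mu p φ) c w)

lemma lie_ad (D : derLie p φ) (w : V p) :
    ⁅D, ad hp φ w⁆ = ad hp φ ((D : Module.End ℂ (V p)) w) :=
  Subtype.ext (lie_apply_eq_of_mem_derSub D.2 w)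

lemma lie_ad_ad (u v : V p) : ⁅ad hp φ u, ad hp φ v⁆ = ad hp φ (mu p φ u v) :=
  lie_ad hp (ad hp φ u) v

lemma lie_mem_map_ad_ker (hΩ : AvoidsOmega1 p φ) (D E : derLie p φ) :
    ⁅D, E⁆ ∈ (LinearMap.ker (coordL p 2)).map (ad hp φ) := by
  obtain ⟨u, hu, h⟩ := exists_lie_eq_mu hp hΩ D.2 E.2
  exact ⟨u, hu, Subtype.ext h.symm⟩

lemma lie_mem_map_ad {U U' : Submodule ℂ (V p)}
    (hU : ∀ u ∈ U, ∀ v ∈ U, mu p φ u v ∈ U') :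
    ∀ x ∈ U.map (ad hp φ), ∀ y ∈ U.map (ad hp φ), ⁅x, y⁆ ∈ U'.map (ad hp φ) := by
  rintro _ ⟨u, hu, rfl⟩ _ ⟨v, hv, rfl⟩
  exact ⟨mu p φ u v, hU u hu v hv, (lie_ad_ad hp u v).symm⟩

omit hp in
lemma mu_mem_span_X_one {u v : V p} (hu : u ∈ LinearMap.ker (coordL p 2))
    (hv : v ∈ LinearMap.ker (coordL p 2)) : mu p φ u v ∈ Submodule.span ℂ {X p 1} := by
  rw [mu_eq_coeffOne_smul_X_one φ hu hv]
  exact Submodule.smul_mem _ _ (Submodule.mem_span_singleton_self _)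

lemma mu_eq_zero_of_mem_span_X_one {u v : V p} (hu : u ∈ Submodule.span ℂ {X p 1})
    (hv : v ∈ Submodule.span ℂ {X p 1}) : mu p φ u v = 0 := by
  obtain ⟨a, rfl⟩ := Submodule.mem_span_singleton.mp hu
  obtain ⟨b, rfl⟩ := Submodule.mem_span_singleton.mp hv
  simp only [map_smul, LinearMap.smul_apply, mu_apply_X_one hp,
    coordL_X_of_ne p 2 1 (by omega) (by omega) (by omega), zero_smul, smul_zero]

lemma ad_X_one_ne_zero : ad hp φ (X p 1) ≠ 0 := by
  intro h
  have h2 := congrArg (fun D : derLie p φ => coordL p 1 ((D : Module.End ℂ (V p)) (X p 2))) h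
  simp only [ad, LinearMap.coe_mk, AddHom.coe_mk, mu_X_one_X_two hp, map_smul,
    coordL_X_self p 1 (by omega) (by omega), ZeroMemClass.coe_zero, LinearMap.zero_apply,
    map_zero] at h2
  norm_num at h2

lemma lie_lie_ad_X_two {k : ℕ} (hk : k ∈ Icc 1 (p-1)) :
    ⁅⁅ad hp φ (X p 2), ad hp φ (X p (2*k+1))⁆,
        ⁅ad hp φ (X p 2), ad hp φ (X p (2*k+2))⁆⁆
      = (φ k * (1 + φ k)) • ad hp φ (X p 1) := by
  rw [lie_ad_ad, lie_ad_ad, lie_ad_ad, mu_X_two_X_odd hp φ hk, mu_X_two_X_even hp φ hk]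
  simp only [map_smul, LinearMap.smul_apply, mu_X_odd_X_even hp φ hk, smul_smul]
  congr 1
  ring

end DerivedSeries

end Fphi

/-- if `φ` avoids `Ω₁` then `Der(F_φ)` is 3-step solvable:
`D³(Der F_φ) = 0` and `D²(Der F_φ) ≠ 0`. -/
theorem stmt8 (p : ℕ) (hp : 2 ≤ p) (φ : ℕ → ℂ) (hΩ : AvoidsOmega1 p φ) :
    LieAlgebra.derivedSeries ℂ ↥(derLie p φ) 3 = ⊥ ∧
    LieAlgebra.derivedSeries ℂ ↥(derLie p φ) 2 ≠ ⊥ := by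
  have h1 : (LieAlgebra.derivedSeries ℂ (derLie p φ) 1).toSubmodule
      ≤ (LinearMap.ker (coordL p 2)).map (Fphi.ad hp φ) :=
    LieAlgebra.derivedSeries_succ_le_of_lie_mem le_top
      fun D _ E _ => Fphi.lie_mem_map_ad_ker hp hΩ D E
  have h2 : (LieAlgebra.derivedSeries ℂ (derLie p φ) 2).toSubmodule
      ≤ (Submodule.span ℂ {X p 1}).map (Fphi.ad hp φ) :=
    LieAlgebra.derivedSeries_succ_le_of_lie_mem h1
      (Fphi.lie_mem_map_ad hp fun _ hu _ hv => Fphi.mu_mem_span_X_one hu hv)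
  have h3 : (LieAlgebra.derivedSeries ℂ (derLie p φ) 3).toSubmodule
      ≤ (⊥ : Submodule ℂ (V p)).map (Fphi.ad hp φ) :=
    LieAlgebra.derivedSeries_succ_le_of_lie_mem h2 (Fphi.lie_mem_map_ad hp
      fun _ hu _ hv => (Fphi.mu_eq_zero_of_mem_span_X_one hp hu hv).symm ▸ Submodule.zero_mem _)
  rw [Submodule.map_bot, le_bot_iff, LieSubmodule.toSubmodule_eq_bot] at h3
  refine ⟨h3, fun h => ?_⟩
  have hk : 1 ∈ Finset.Icc 1 (p-1) := Finset.mem_Icc.mpr ⟨le_rfl, by omega⟩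
  have hmem := LieAlgebra.lie_lie_mem_derivedSeries_two (R := ℂ) (Fphi.ad hp φ (X p 2))
    (Fphi.ad hp φ (X p (2*1+1))) (Fphi.ad hp φ (X p 2)) (Fphi.ad hp φ (X p (2*1+2)))
  rw [h, Fphi.lie_lie_ad_X_two hp hk, LieSubmodule.mem_bot] at hmem
  exact smul_ne_zero (mul_ne_zero (hΩ.ne_zero hk) (hΩ.one_add_ne_zero hk))
    (Fphi.ad_X_one_ne_zero hp) hmem
end
end

section
/- If φ avoids Ω, then for every integer k with k ≤ −3 or k ≥ 2, every 2-cocycle on F_φ of degree k is zero: Z²_k = 0. -/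
/-!
A cochain of degree `k` maps `g_a × g_b` into `g_{a+b+k}`, and only `g₀, g₁, g₂` are nonzero;
an alternating cochain also vanishes on `g₀ × g₀` and `g₂ × g₂`. Hence for `k ≥ 2` or `k ≤ -4`
every value on a pair of basis vectors lies in the zero space. For `k = -3` the only value left
is `ψ(X₁, X_j) ∈ g₀ = ℂ X₂` with `j ≥ 3`, and the cocycle identity on `(X₂, X₁, X_j)` reduces to
`(1 + c) ψ(X₁, X_j) = 0`, where `c ∈ {-φ_m, 1 + φ_m}` is the eigenvalue of `ad X₂` on `X_j`;
the conditions `1 - φ_m ≠ 0` and `2 + φ_m ≠ 0` of `Ω` make `1 + c` nonzero.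
-/

open scoped BigOperators

noncomputable section

attribute [local instance 100] LieRing.ofAssociativeRing

lemma coordL_X_of_ne {p i j : ℕ} (hj : 1 ≤ j) (h : j ≠ i) : coordL p j (X p i) = 0 := by
  unfold coordL
  split_ifs with hlt
  · simp only [LinearMap.proj_apply, X]; rw [if_neg (by omega)]
  · rfl

lemma coordL_X_self {p j : ℕ} (hj : 1 ≤ j) (hj' : j ≤ 2 * p) : coordL p j (X p j) = 1 := by
  simp only [coordL, dif_pos (show j - 1 < 2 * p by omega), LinearMap.proj_apply, X]
  rw [if_pos (by omega)]

lemma elem_apply (p a b : ℕ) (v x y : V p) :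
    elem p a b v x y = (coordL p a x * coordL p b y - coordL p b x * coordL p a y) • v := by
  simp [elem, smul_smul, sub_smul]

lemma mu_apply_self (p : ℕ) (φ : ℕ → ℂ) (x : V p) : mu p φ x x = 0 := by
  simp [mu, elem_apply, mul_comm]

lemma mu_X_two_X_one {p : ℕ} (hp : 1 ≤ p) (φ : ℕ → ℂ) : mu p φ (X p 2) (X p 1) = X p 1 := by
  simp only [mu, LinearMap.add_apply, LinearMap.sum_apply]
  rw [Finset.sum_eq_zero fun m hm => by
    simp only [Finset.mem_Icc] at hm; simp (disch := omega) [elem_apply, coordL_X_of_ne]]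
  simp (disch := omega) [elem_apply, coordL_X_of_ne, coordL_X_self]

lemma mu_X_one_X {p j : ℕ} (φ : ℕ → ℂ) (hj : 3 ≤ j) : mu p φ (X p 1) (X p j) = 0 := by
  simp only [mu, LinearMap.add_apply, LinearMap.sum_apply]
  rw [Finset.sum_eq_zero fun m hm => by
    simp only [Finset.mem_Icc] at hm; simp (disch := omega) [elem_apply, coordL_X_of_ne]]
  simp (disch := omega) [elem_apply, coordL_X_of_ne]

lemma mu_X_two_X_odd {p k : ℕ} (φ : ℕ → ℂ) (hk : 1 ≤ k) (hk' : k ≤ p - 1) :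
    mu p φ (X p 2) (X p (2 * k + 1)) = -φ k • X p (2 * k + 1) := by
  simp only [mu, LinearMap.add_apply, LinearMap.sum_apply]
  rw [Finset.sum_eq_single_of_mem k (Finset.mem_Icc.2 ⟨hk, hk'⟩) fun m _ hmk => by
    simp (disch := omega) [elem_apply, coordL_X_of_ne]]
  simp (disch := omega) [elem_apply, coordL_X_of_ne, coordL_X_self]

lemma mu_X_two_X_even {p k : ℕ} (φ : ℕ → ℂ) (hk : 1 ≤ k) (hk' : k ≤ p - 1) :
    mu p φ (X p 2) (X p (2 * k + 2)) = (1 + φ k) • X p (2 * k + 2) := by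
  simp only [mu, LinearMap.add_apply, LinearMap.sum_apply]
  rw [Finset.sum_eq_single_of_mem k (Finset.mem_Icc.2 ⟨hk, hk'⟩) fun m _ hmk => by
    simp (disch := omega) [elem_apply, coordL_X_of_ne]]
  simp (disch := omega) [elem_apply, coordL_X_of_ne, coordL_X_self]

lemma exists_mu_X_two_X_eq_smul {p j : ℕ} {φ : ℕ → ℂ} (hΩ : AvoidsOmega p φ) (hj : 3 ≤ j)
    (hj' : j ≤ 2 * p) : ∃ c : ℂ, mu p φ (X p 2) (X p j) = c • X p j ∧ 1 + c ≠ 0 := by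
  obtain ⟨k, hk, hk', rfl | rfl⟩ : ∃ k, 1 ≤ k ∧ k ≤ p - 1 ∧ (j = 2 * k + 1 ∨ j = 2 * k + 2) :=
    ⟨(j - 1) / 2, by omega, by omega, by omega⟩
  all_goals have hΩk := hΩ.2 k k hk hk' hk hk'
  · exact ⟨-φ k, mu_X_two_X_odd φ hk hk', by simpa [← sub_eq_add_neg] using hΩk.2.2.2.1⟩
  · exact ⟨1 + φ k, mu_X_two_X_even φ hk hk', fun h => hΩk.2.2.1 (by linear_combination h)⟩

lemma gr_eq_bot {p : ℕ} {n : ℤ} (hn : n < 0 ∨ 2 < n) : gr p n = ⊥ := by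
  unfold gr
  rw [if_neg (by omega), if_neg (by omega), if_neg (by omega)]

lemma X_one_mem_gr (p : ℕ) : X p 1 ∈ gr p 2 := by simp [gr]

lemma X_two_mem_gr (p : ℕ) : X p 2 ∈ gr p 0 := by simp [gr]

lemma X_mem_gr_one {p j : ℕ} (hj : 3 ≤ j) (hj' : j ≤ 2 * p) : X p j ∈ gr p 1 := by
  simp only [gr, one_ne_zero, if_false, if_true]
  exact Submodule.subset_span ⟨j, hj, hj', rfl⟩

lemma exists_X_mem_gr {p j : ℕ} (hj : 1 ≤ j) (hj' : j ≤ 2 * p) :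
    ∃ a : ℤ, X p j ∈ gr p a ∧ (j = 1 ∧ a = 2 ∨ j = 2 ∧ a = 0 ∨ 3 ≤ j ∧ a = 1) := by
  rcases (by omega : j = 1 ∨ j = 2 ∨ 3 ≤ j) with rfl | rfl | h3
  · exact ⟨2, X_one_mem_gr p, by omega⟩
  · exact ⟨0, X_two_mem_gr p, by omega⟩
  · exact ⟨1, X_mem_gr_one h3 hj', by omega⟩

lemma apply_eq_zero_of_mem_degF {p : ℕ} {k a b : ℤ} {ψ : V p → V p → V p} (hψ : ψ ∈ degF p k)
    {x y : V p} (hx : x ∈ gr p a) (hy : y ∈ gr p b) (h : a + b + k < 0 ∨ 2 < a + b + k) :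
    ψ x y = 0 := by
  simpa [gr_eq_bot h] using hψ a b x hx y hy

namespace IsBil

variable {p : ℕ} {ψ : V p → V p → V p}

lemma zero_left (hψ : IsBil p ψ) (y : V p) : ψ 0 y = 0 := by
  simpa using hψ.2.1 0 0 y

lemma apply_swap (hψ : IsBil p ψ) (halt : ∀ x, ψ x x = 0) (x y : V p) : ψ y x = -ψ x y := by
  have h := halt (x + y)
  rw [hψ.1, hψ.2.2.1, hψ.2.2.1, halt x, halt y, zero_add, add_zero] at h
  exact eq_neg_of_add_eq_zero_right h

lemma eq_zero_of_apply_X (hψ : IsBil p ψ)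
    (h : ∀ i j, 1 ≤ i → i ≤ 2 * p → 1 ≤ j → j ≤ 2 * p → ψ (X p i) (X p j) = 0) : ψ = 0 := by
  have hX : ∀ i : Fin (2 * p), X p (i + 1) = Pi.basisFun ℂ (Fin (2 * p)) i := by
    intro i; ext l; simp [X, Pi.single_apply, Fin.ext_iff, eq_comm]
  have hB : LinearMap.mk₂ ℂ ψ hψ.1 hψ.2.1 hψ.2.2.1 hψ.2.2.2 = 0 :=
    LinearMap.ext_basis (Pi.basisFun ℂ _) (Pi.basisFun ℂ _) fun i j => by
      simpa [← hX] using h (i + 1) (j + 1) (by omega) (by omega) (by omega) (by omega)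
  funext x y
  exact LinearMap.congr_fun₂ hB x y

end IsBil

lemma apply_X_one_X_eq_zero {p j : ℕ} {φ : ℕ → ℂ} (hΩ : AvoidsOmega p φ)
    {ψ : V p → V p → V p} (hψ : ψ ∈ Z2F p φ) (hdeg : ψ ∈ degF p (-3)) (hj : 3 ≤ j)
    (hj' : j ≤ 2 * p) : ψ (X p 1) (X p j) = 0 := by
  obtain ⟨hbil, halt, hcoc⟩ := hψ
  have h₁ := hdeg 2 1 _ (X_one_mem_gr p) _ (X_mem_gr_one hj hj')
  have h₂ := apply_eq_zero_of_mem_degF hdeg (X_two_mem_gr p) (X_mem_gr_one hj hj') (by omega)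
  have h₃ := apply_eq_zero_of_mem_degF hdeg (X_two_mem_gr p) (X_one_mem_gr p) (by omega)
  obtain ⟨c, hc, hc1⟩ := exists_mu_X_two_X_eq_smul hΩ hj hj'
  obtain ⟨d, hd⟩ := Submodule.mem_span_singleton.mp (by simpa [gr] using h₁)
  have hcomm : mu p φ (X p 2) (ψ (X p 1) (X p j)) = 0 := by
    rw [← hd, map_smul, mu_apply_self, smul_zero]
  have E := hcoc (X p 2) (X p 1) (X p j)
  rw [hcomm, h₂, h₃, mu_X_two_X_one (by omega), hc, mu_X_one_X φ hj, hbil.2.1,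
    hbil.apply_swap halt (X p 1) (X p j), map_zero, map_zero, hbil.zero_left] at E
  exact (smul_eq_zero.mp (by linear_combination (norm := module) -E)).resolve_left hc1

theorem stmt10_general (p : ℕ) (φ : ℕ → ℂ) (hΩ : AvoidsOmega p φ) :
    ∀ k : ℤ, (k ≤ -3 ∨ 2 ≤ k) → Z2F p φ ⊓ degF p k = ⊥ := by
  intro k hk
  refine eq_bot_iff.2 fun ψ hψ => (Submodule.mem_bot ℂ).2 ?_
  obtain ⟨hZ, hdeg⟩ := Submodule.mem_inf.1 hψ
  refine hZ.1.eq_zero_of_apply_X fun i j hi hi' hj hj' => ?_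
  by_cases hij : i = j
  · exact hij ▸ hZ.2.1 _
  by_cases hk3 : k = -3 ∧ (i = 1 ∧ 3 ≤ j ∨ 3 ≤ i ∧ j = 1)
  · obtain ⟨rfl, ⟨rfl, hj3⟩ | ⟨hi3, rfl⟩⟩ := hk3
    · exact apply_X_one_X_eq_zero hΩ hZ hdeg hj3 hj'
    · rw [hZ.1.apply_swap hZ.2.1, apply_X_one_X_eq_zero hΩ hZ hdeg hi3 hi', neg_zero]
  obtain ⟨a, ha, hai⟩ := exists_X_mem_gr hi hi'
  obtain ⟨b, hb, hbj⟩ := exists_X_mem_gr hj hj'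
  exact apply_eq_zero_of_mem_degF hdeg ha hb (by omega)

/-- if `φ` avoids `Ω` then for every `k ≤ −3` or `k ≥ 2` the space
`Z²_k` of 2-cocycles of degree `k` vanishes. -/
theorem stmt10 (p : ℕ) (hp : 2 ≤ p) (φ : ℕ → ℂ) (hΩ : AvoidsOmega p φ) :
    ∀ k : ℤ, (k ≤ -3 ∨ 2 ≤ k) → Z2F p φ ⊓ degF p k = ⊥ :=
  stmt10_general p φ hΩ
end
end
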